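/- arXiv:1404.0697 — 4 statements merged into one kernel-verified Lean document; each statement's English description precedes it below -/
import Mathlib

section
/- Let G be an α-quasirandom graph of density d with at most (3/2)n vertices, and let V' ⊆ V(G) satisfy |V'| ≥ εn. Then the induced subgraph G[V'] is (3α/ε²)-quasirandom of density d ± 3α/ε². -/
/-!
The density `d` itself works for `G[V']`: a set `B ⊆ V'` is also a set of `G`, so its edge count
is `d·C(|B|,2)` up to `α|V|² ≤ α(3n/2)²`, and `|V'| ≥ εn` turns this into at most
`(9/4)(α/ε²)|V'|² ≤ (3α/ε²)|V'|²`.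
-/

open Finset

lemma mul_sq_le_of_le_mul_of_mul_le {α ε c m n k : ℝ} (hα : 0 ≤ α) (hε : 0 < ε)
    (hm : 0 ≤ m) (hn : 0 ≤ n) (hmn : m ≤ c * n) (hnk : ε * n ≤ k) :
    α * m ^ 2 ≤ c ^ 2 * α / ε ^ 2 * k ^ 2 := by
  have hεn : 0 ≤ ε * n := by positivity
  calc α * m ^ 2
      ≤ α * (c * n) ^ 2 := by gcongr
    _ = c ^ 2 * α / ε ^ 2 * (ε * n) ^ 2 := by field_simp
    _ ≤ c ^ 2 * α / ε ^ 2 * k ^ 2 := by gcongr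

/-- Induced subgraphs of quasirandom graphs inherit quasirandomness and density. -/
theorem statement1 {V : Type} [Fintype V] [DecidableEq V]
    (G : SimpleGraph V) [DecidableRel G.Adj] (n : ℕ) (ε α d : ℝ)
    (hε : 0 < ε) (hα : 0 < α)
    (horder : (Fintype.card V : ℝ) ≤ 3 / 2 * n)
    (hquasi : ∀ B : Finset V,
      |(((B ×ˢ B).filter fun p => G.Adj p.1 p.2).card : ℝ) / 2
        - d * (B.card.choose 2 : ℝ)| ≤ α * (Fintype.card V : ℝ) ^ 2)
    (V' : Finset V) (hV' : ε * n ≤ (V'.card : ℝ)) :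
    ∃ d' : ℝ, |d' - d| ≤ 3 * α / ε ^ 2 ∧
      ∀ B ⊆ V',
        |(((B ×ˢ B).filter fun p => G.Adj p.1 p.2).card : ℝ) / 2
          - d' * (B.card.choose 2 : ℝ)| ≤ 3 * α / ε ^ 2 * (V'.card : ℝ) ^ 2 := by
  refine ⟨d, by simpa using (by positivity : 0 ≤ 3 * α / ε ^ 2), fun B _ => ?_⟩
  have hrescaled := mul_sq_le_of_le_mul_of_mul_le hα.le hε (Nat.cast_nonneg _)
    (Nat.cast_nonneg n) horder hV'
  calc _ ≤ α * (Fintype.card V : ℝ) ^ 2 := hquasi B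
    _ ≤ (3 / 2) ^ 2 * α / ε ^ 2 * (V'.card : ℝ) ^ 2 := hrescaled
    _ ≤ 3 * α / ε ^ 2 * (V'.card : ℝ) ^ 2 := by gcongr; norm_num
end

section
/- For every M ∈ (0,1] and every a ∈ (−0.5, ∞), we have M − |a| ≤ M^{1+a} ≤ M + |a|. -/
/-!
Bernoulli's inequality for `(1 + s) ^ p` with `s = M - 1 ∈ [-1, 0]` and `p = 1 + a ≥ 0` compares
`M ^ p` with its tangent line `1 + p (M - 1) = M + a (M - 1)`, while monotonicity of `p ↦ M ^ p`
puts `M` on the other side of `M ^ p`. Hence `|M ^ (1 + a) - M| ≤ |a| (1 - M) ≤ |a|`.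
-/

namespace Real

variable {x t : ℝ}

theorem rpow_sub_self_le_of_le_one (hx0 : 0 ≤ x) (ht0 : 0 ≤ t) (ht1 : t ≤ 1) :
    x ^ t - x ≤ (1 - t) * (1 - x) := by
  have h := rpow_one_add_le_one_add_mul_self (s := x - 1) (by linarith) ht0 ht1
  rw [add_sub_cancel] at h
  linarith

theorem self_sub_rpow_le_of_one_le (hx0 : 0 ≤ x) (ht : 1 ≤ t) :
    x - x ^ t ≤ (t - 1) * (1 - x) := by
  have h := one_add_mul_self_le_rpow_one_add (s := x - 1) (by linarith) ht
  rw [add_sub_cancel] at h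
  linarith

theorem abs_rpow_sub_self_le (hx0 : 0 ≤ x) (hx1 : x ≤ 1) (ht : 0 ≤ t) :
    |x ^ t - x| ≤ |t - 1| * (1 - x) := by
  rcases le_total t 1 with ht1 | ht1
  · rw [abs_of_nonneg (sub_nonneg.2 (self_le_rpow_of_le_one hx0 hx1 ht1)),
      abs_of_nonpos (sub_nonpos.2 ht1), neg_sub]
    exact rpow_sub_self_le_of_le_one hx0 ht ht1
  · rw [abs_of_nonpos (sub_nonpos.2 (rpow_le_self_of_le_one hx0 hx1 ht1)),
      abs_of_nonneg (sub_nonneg.2 ht1), neg_sub]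
    exact self_sub_rpow_le_of_one_le hx0 ht1

end Real

/-- For M ∈ (0,1] and a > −0.5, we have M − |a| ≤ M^{1+a} ≤ M + |a|. -/
theorem statement2 (M a : ℝ) (hM0 : 0 < M) (hM1 : M ≤ 1) (ha : -0.5 < a) :
    M - |a| ≤ M ^ (1 + a) ∧ M ^ (1 + a) ≤ M + |a| := by
  have h := Real.abs_rpow_sub_self_le hM0.le hM1 (t := 1 + a) (by linarith)
  rw [add_sub_cancel_left] at h
  have hle : |M ^ (1 + a) - M| ≤ |a| :=
    h.trans (mul_le_of_le_one_right (abs_nonneg a) (by linarith))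
  rw [abs_sub_le_iff] at hle
  exact ⟨by linarith, by linarith⟩
end

section
/- Let h : Ω → ℝ be a C-Lipschitz function on a finite product probability space Ω = Ω₁ × ⋯ × Ω_k (changing one coordinate changes h by at most C). Then for each t > 0, P[|h − E[h]| > t] ≤ 2·exp(−2t²/(C²k)). -/
/-!
Peel off the first coordinate: writing `f = (F - 𝔼 f) + (f - F)` with `F` the average of `f`
over the remaining coordinates, `F` oscillates by at most `C`, so Hoeffding's lemma makes
`F - 𝔼 f` sub-Gaussian with variance proxy `C² / 4`, while for each fixed first coordinate
`f - F` is sub-Gaussian with proxy `(k - 1) C² / 4` by induction. By Fubini the proxies add up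
to `k C² / 4`, and the Chernoff bound for both tails gives `2 exp (-2 t² / (k C²))`.
-/

open MeasureTheory ProbabilityTheory Real
open scoped NNReal

universe u

def HasBoundedDifferences {ι : Type*} {Ω : ι → Type*} (f : (∀ i, Ω i) → ℝ) (C : ℝ) : Prop :=
  ∀ (ω ω' : ∀ i, Ω i) (i : ι), (∀ j, j ≠ i → ω j = ω' j) → |f ω - f ω'| ≤ C

namespace HasBoundedDifferences

variable {ι : Type*} {Ω : ι → Type*} {f : (∀ i, Ω i) → ℝ} {C : ℝ}

lemma abs_sub_le_card_mul_of_eq_of_notMem [DecidableEq ι] (hf : HasBoundedDifferences f C)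
    (S : Finset ι) {ω ω' : ∀ i, Ω i} (h : ∀ j ∉ S, ω j = ω' j) :
    |f ω - f ω'| ≤ S.card * C := by
  induction S using Finset.induction_on generalizing ω with
  | empty => simp [funext fun j ↦ h j (Finset.notMem_empty j)]
  | @insert i S hiS ih =>
    have h₁ : |f ω - f (Function.update ω i (ω' i))| ≤ C :=
      hf _ _ i fun j hj ↦ (Function.update_of_ne hj _ _).symm
    have h₂ : |f (Function.update ω i (ω' i)) - f ω'| ≤ S.card * C := by
      refine ih fun j hj ↦ ?_
      rcases eq_or_ne j i with rfl | hji
      · exact Function.update_self ..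
      · rw [Function.update_of_ne hji]
        exact h j (by simp [hji, hj])
    calc |f ω - f ω'|
        ≤ |f ω - f (Function.update ω i (ω' i))| + |f (Function.update ω i (ω' i)) - f ω'| :=
          abs_sub_le _ _ _
      _ ≤ (insert i S).card * C := by
          rw [Finset.card_insert_of_notMem hiS]; push_cast; linarith

lemma abs_sub_le_card_mul [Fintype ι] (hf : HasBoundedDifferences f C) (ω ω' : ∀ i, Ω i) :
    |f ω - f ω'| ≤ Fintype.card ι * C := by
  classical
  simpa using hf.abs_sub_le_card_mul_of_eq_of_notMem Finset.univ (ω := ω) (ω' := ω') (by simp)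

lemma abs_le [Fintype ι] (hf : HasBoundedDifferences f C) (ω₀ ω : ∀ i, Ω i) :
    |f ω| ≤ |f ω₀| + Fintype.card ι * C := by
  have := hf.abs_sub_le_card_mul ω ω₀
  have := abs_sub_abs_le_abs_sub (f ω) (f ω₀)
  linarith

lemma comp_insertNth {n : ℕ} {Ω : Fin (n + 1) → Type*} {f : (∀ i, Ω i) → ℝ}
    (hf : HasBoundedDifferences f C) (p : Fin (n + 1)) (x : Ω p) :
    HasBoundedDifferences (fun y ↦ f (p.insertNth x y)) C := by
  intro y y' j hyy
  refine hf _ _ (p.succAbove j) fun i hi ↦ ?_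
  rcases eq_or_ne i p with rfl | hip
  · simp
  · obtain ⟨i, rfl⟩ := Fin.exists_succAbove_eq hip
    simpa using hyy i (by rintro rfl; exact hi rfl)

lemma abs_sub_insertNth_le {n : ℕ} {Ω : Fin (n + 1) → Type*} {f : (∀ i, Ω i) → ℝ}
    (hf : HasBoundedDifferences f C) (p : Fin (n + 1)) (x x' : Ω p) (y : ∀ j, Ω (p.succAbove j)) :
    |f (p.insertNth x y) - f (p.insertNth x' y)| ≤ C :=
  hf _ _ p fun i hi ↦ by
    obtain ⟨j, rfl⟩ := Fin.exists_succAbove_eq hi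
    simp

end HasBoundedDifferences

namespace ProbabilityTheory

variable {Ω : Type*} [MeasurableSpace Ω] {μ : Measure Ω}

lemma hasSubgaussianMGF_of_abs_sub_le [IsProbabilityMeasure μ] {X : Ω → ℝ}
    (hX : AEMeasurable X μ) {C : ℝ} (hC : ∀ ω ω', |X ω - X ω'| ≤ C) :
    HasSubgaussianMGF (fun ω ↦ X ω - μ[X]) ((‖C‖₊ / 2) ^ 2) μ := by
  have hΩ := nonempty_of_isProbabilityMeasure μ
  have hbdd : BddBelow (Set.range X) :=
    ⟨X hΩ.some - C, by rintro _ ⟨ω, rfl⟩; linarith [(abs_le.mp (hC hΩ.some ω)).2]⟩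
  have hIcc : ∀ ω, X ω ∈ Set.Icc (⨅ ω, X ω) ((⨅ ω, X ω) + C) := fun ω ↦
    ⟨ciInf_le hbdd ω, by
      have : X ω - C ≤ ⨅ ω, X ω := le_ciInf fun ω' ↦ by linarith [(abs_le.mp (hC ω ω')).2]
      linarith⟩
  simpa using hasSubgaussianMGF_of_mem_Icc hX (ae_of_all μ hIcc)

variable {Ω' : Type*} [MeasurableSpace Ω'] {ν : Measure Ω'}

lemma hasSubgaussianMGF_prod_of_sections [IsProbabilityMeasure μ] [IsProbabilityMeasure ν]
    {g : Ω × Ω' → ℝ} (hg : AEMeasurable g (μ.prod ν)) {M : ℝ} (hM : ∀ z, |g z| ≤ M)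
    {c₁ c₂ : ℝ≥0}
    (hF : HasSubgaussianMGF (fun x ↦ ∫ y, g (x, y) ∂ν - ∫ x', ∫ y, g (x', y) ∂ν ∂μ) c₁ μ)
    (hsec : ∀ x, HasSubgaussianMGF (fun y ↦ g (x, y) - ∫ y, g (x, y) ∂ν) c₂ ν) :
    HasSubgaussianMGF (fun z ↦ g z - ∫ z, g z ∂(μ.prod ν)) (c₁ + c₂) (μ.prod ν) := by
  set m := ∫ z, g z ∂(μ.prod ν)
  set F := fun x ↦ ∫ y, g (x, y) ∂ν
  have hgIcc : ∀ z, g z ∈ Set.Icc (-M) M := fun z ↦ abs_le.mp (hM z)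
  have hm : m = ∫ x, F x ∂μ := integral_prod g (.of_mem_Icc _ _ hg (ae_of_all _ hgIcc))
  have hexp : ∀ t, Integrable (fun z ↦ exp (t * (g z - m))) (μ.prod ν) := fun t ↦
    integrable_exp_mul_of_mem_Icc (a := -M - m) (b := M - m) (hg.sub_const m)
      (ae_of_all _ fun z ↦ ⟨by linarith [(hgIcc z).1], by linarith [(hgIcc z).2]⟩)
  refine ⟨hexp, fun t ↦ ?_⟩
  rw [← hm] at hF
  -- factor `exp (t (g - m)) = exp (t (F x - m)) * exp (t (g - F x))` and integrate out `y` first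
  calc mgf (fun z ↦ g z - m) (μ.prod ν) t
      = ∫ x, exp (t * (F x - m)) * mgf (fun y ↦ g (x, y) - F x) ν t ∂μ := by
        rw [mgf, integral_prod _ (hexp t)]
        refine integral_congr_ae (ae_of_all _ fun x ↦ ?_)
        simp only [mgf, ← integral_const_mul, ← exp_add]
        congr 1 with y
        ring_nf
    _ ≤ ∫ x, exp (t * (F x - m)) * exp (c₂ * t ^ 2 / 2) ∂μ :=
        integral_mono_of_nonneg (ae_of_all _ fun x ↦ mul_nonneg (exp_pos _).le mgf_nonneg)
          ((hF.integrable_exp_mul t).mul_const _)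
          (ae_of_all _ fun x ↦ mul_le_mul_of_nonneg_left ((hsec x).mgf_le t) (exp_pos _).le)
    _ = mgf (fun x ↦ F x - m) μ t * exp (c₂ * t ^ 2 / 2) := integral_mul_const _ _
    _ ≤ exp (c₁ * t ^ 2 / 2) * exp (c₂ * t ^ 2 / 2) :=
        mul_le_mul_of_nonneg_right (hF.mgf_le t) (exp_pos _).le
    _ = exp (↑(c₁ + c₂) * t ^ 2 / 2) := by rw [← exp_add]; push_cast; ring_nf

lemma HasSubgaussianMGF.measure_le_abs_le [IsFiniteMeasure μ] {X : Ω → ℝ} {c : ℝ≥0}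
    (hX : HasSubgaussianMGF X c μ) {ε : ℝ} (hε : 0 ≤ ε) :
    μ {ω | ε ≤ |X ω|} ≤ ENNReal.ofReal (2 * exp (-ε ^ 2 / (2 * c))) := by
  have hsub : {ω | ε ≤ |X ω|} ⊆ {ω | ε ≤ X ω} ∪ {ω | ε ≤ (-X) ω} := fun ω hω ↦
    (le_abs'.mp hω : X ω ≤ -ε ∨ ε ≤ X ω).elim (fun h ↦ Or.inr (show ε ≤ -X ω by linarith)) Or.inl
  calc μ {ω | ε ≤ |X ω|}
      ≤ μ {ω | ε ≤ X ω} + μ {ω | ε ≤ (-X) ω} := (measure_mono hsub).trans (measure_union_le _ _)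
    _ = ENNReal.ofReal (μ.real {ω | ε ≤ X ω}) + ENNReal.ofReal (μ.real {ω | ε ≤ (-X) ω}) := by
        rw [ofReal_measureReal, ofReal_measureReal]
    _ ≤ ENNReal.ofReal (exp (-ε ^ 2 / (2 * c))) + ENNReal.ofReal (exp (-ε ^ 2 / (2 * c))) := by
        gcongr
        exacts [hX.measure_ge_le hε, hX.neg.measure_ge_le hε]
    _ = ENNReal.ofReal (2 * exp (-ε ^ 2 / (2 * c))) := by
        rw [← ENNReal.ofReal_add (exp_pos _).le (exp_pos _).le]
        ring_nf

end ProbabilityTheory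

theorem hasSubgaussianMGF_pi_of_hasBoundedDifferences {k : ℕ} {Ω : Fin k → Type u}
    [∀ i, MeasurableSpace (Ω i)] (μ : ∀ i, Measure (Ω i)) [∀ i, IsProbabilityMeasure (μ i)]
    {f : (∀ i, Ω i) → ℝ} (hf : Measurable f) {C : ℝ} (hfC : HasBoundedDifferences f C) :
    HasSubgaussianMGF (fun ω ↦ f ω - ∫ x, f x ∂Measure.pi μ) (k * (‖C‖₊ / 2) ^ 2)
      (Measure.pi μ) := by
  induction k with
  | zero =>
    have hzero : (fun ω ↦ f ω - ∫ x, f x ∂Measure.pi μ) = fun _ ↦ 0 := funext fun ω ↦ by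
      rw [integral_unique, Subsingleton.elim ω default]; simp
    simp [hzero]
  | succ k ih =>
    set e := MeasurableEquiv.piFinSuccAbove Ω 0
    set ν := Measure.pi fun j ↦ μ ((0 : Fin (k + 1)).succAbove j)
    have he : MeasurePreserving e (Measure.pi μ) ((μ 0).prod ν) :=
      measurePreserving_piFinSuccAbove μ 0
    set g := fun z ↦ f (e.symm z)
    have hg : Measurable g := hf.comp e.symm.measurable
    have hint : ∫ x, f x ∂Measure.pi μ = ∫ z, g z ∂(μ 0).prod ν := by
      simp only [← he.integral_comp' g, g, e.symm_apply_apply]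
    obtain ⟨ω₀⟩ := nonempty_of_isProbabilityMeasure (Measure.pi μ)
    set M := |f ω₀| + (k + 1) * C
    have hgM : ∀ z, |g z| ≤ M := fun z ↦ by simpa [g, M] using hfC.abs_le ω₀ (e.symm z)
    have hsec_int : ∀ x, Integrable (fun y ↦ g (x, y)) ν := fun x ↦
      .of_mem_Icc (-M) M (hg.comp measurable_prodMk_left).aemeasurable
        (ae_of_all _ fun y ↦ abs_le.mp (hgM (x, y)))
    have hF_osc : ∀ x x', |∫ y, g (x, y) ∂ν - ∫ y, g (x', y) ∂ν| ≤ C := fun x x' ↦ by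
      rw [← integral_sub (hsec_int x) (hsec_int x')]
      have := norm_integral_le_of_norm_le_const (μ := ν)
        (f := fun y ↦ g (x, y) - g (x', y)) (ae_of_all _ fun y ↦ hfC.abs_sub_insertNth_le 0 x x' y)
      rwa [probReal_univ (μ := ν), mul_one] at this
    have hprod := hasSubgaussianMGF_prod_of_sections hg.aemeasurable hgM
      (hasSubgaussianMGF_of_abs_sub_le (μ := μ 0)
        hg.stronglyMeasurable.integral_prod_right'.measurable.aemeasurable hF_osc)
      fun x ↦ ih _ (hg.comp measurable_prodMk_left) (hfC.comp_insertNth 0 x)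
    rw [← hint, ← he.map_eq] at hprod
    convert hprod.of_map he.measurable.aemeasurable using 1
    · funext ω; simp only [Function.comp_apply, g, e.symm_apply_apply]
    · push_cast; ring

theorem statement12_general (k : ℕ) (Ω : Fin k → Type*) [∀ i, MeasurableSpace (Ω i)]
    (μ : ∀ i, Measure (Ω i)) [∀ i, IsProbabilityMeasure (μ i)]
    (f : (∀ i, Ω i) → ℝ) (hf : Measurable f) (C : ℝ)
    (hLip : ∀ (ω ω' : ∀ i, Ω i) (i : Fin k),
      (∀ j, j ≠ i → ω j = ω' j) → |f ω - f ω'| ≤ C)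
    (t : ℝ) (ht : 0 < t) :
    Measure.pi μ {ω | t < |f ω - ∫ x, f x ∂(Measure.pi μ)|}
      ≤ ENNReal.ofReal (2 * Real.exp (-2 * t ^ 2 / (C ^ 2 * k))) := by
  have hvar : (2 * ((k * (‖C‖₊ / 2) ^ 2 : ℝ≥0) : ℝ)) = C ^ 2 * k / 2 := by
    push_cast; rw [Real.norm_eq_abs, div_pow, sq_abs]; ring
  calc Measure.pi μ {ω | t < |f ω - ∫ x, f x ∂(Measure.pi μ)|}
      ≤ Measure.pi μ {ω | t ≤ |f ω - ∫ x, f x ∂(Measure.pi μ)|} :=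
        measure_mono (Set.ofPred_subset_ofPred.mpr fun _ ↦ le_of_lt)
    _ ≤ _ := (hasSubgaussianMGF_pi_of_hasBoundedDifferences μ hf hLip).measure_le_abs_le ht.le
    -- also for `k = 0`, where both exponents are junk divisions by zero
    _ = ENNReal.ofReal (2 * Real.exp (-2 * t ^ 2 / (C ^ 2 * k))) := by
        rw [hvar, div_div_eq_mul_div]; ring_nf

/-- McDiarmid's inequality: a C-Lipschitz function on a product of k probability
spaces deviates from its expectation by more than t with probability at most
2·exp(−2t²/(C²k)). -/
theorem statement12 (k : ℕ) (Ω : Fin k → Type*) [∀ i, MeasurableSpace (Ω i)]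
    (μ : ∀ i, Measure (Ω i)) [∀ i, IsProbabilityMeasure (μ i)]
    (f : (∀ i, Ω i) → ℝ) (hf : Measurable f) (C : ℝ) (hC : 0 < C)
    (hLip : ∀ (ω ω' : ∀ i, Ω i) (i : Fin k),
      (∀ j, j ≠ i → ω j = ω' j) → |f ω - f ω'| ≤ C)
    (t : ℝ) (ht : 0 < t) :
    Measure.pi μ {ω | t < |f ω - ∫ x, f x ∂(Measure.pi μ)|}
      ≤ ENNReal.ofReal (2 * Real.exp (-2 * t ^ 2 / (C ^ 2 * k))) :=
  statement12_general k Ω μ f hf C hLip t ht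
end

section
/- Let ε ∈ (0, 10⁻³) and n sufficiently large. Consider the family of ℓ = ⌊C(n,2)/((1/2 + 2√ε)n)⌋ copies of the star with (1/2 + 2√ε)n edges. Then this family, whose total number of edges lies between C(n,2) − n and C(n,2), does not pack into K_{(1+ε)n}. -/
/-!
Every packed edge of a star has the star's centre as an endpoint, so no packed edge lies inside
the set `W` of vertices that are not centres. With `ℓ` stars, `|W| ≥ N - ℓ`, hence
`ℓ s + C(N - ℓ, 2) ≤ C(N, 2)`. For `s = (1/2 + 2√ε) n` and `ℓ s ≤ C(n, 2)` one gets
`ℓ < (1 - 3√ε) n`, so `|W| ≥ 3√ε n`, and `C(n, 2) - n ≤ ℓ s` becomes incompatible with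
`N = (1 + ε) n` once `εn > 1`.
-/

open Finset

def IsStarPacking {ι V : Type*} {s : ℕ} (f : ι → Fin (s + 1) → V) : Prop :=
  (∀ i, Function.Injective (f i)) ∧
    ∀ i j, i ≠ j → ∀ a b c e : Fin (s + 1), a ≠ b → (a = 0 ∨ b = 0) → c ≠ e →
      (c = 0 ∨ e = 0) → s(f i a, f i b) ≠ s(f j c, f j e)

section StarPacking

variable {ι V : Type*} [Fintype ι] [DecidableEq V] {s : ℕ}

def starCentres (f : ι → Fin (s + 1) → V) : Finset V :=
  univ.image fun i => f i 0

def starEdges (f : ι → Fin (s + 1) → V) : Finset (Sym2 V) :=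
  (univ ×ˢ univ.erase 0).image fun p => s(f p.1 0, f p.1 p.2)

theorem mem_starEdges {f : ι → Fin (s + 1) → V} {e : Sym2 V} :
    e ∈ starEdges f ↔ ∃ i, ∃ a ≠ 0, s(f i 0, f i a) = e := by
  simp [starEdges]

theorem IsStarPacking.card_starEdges {f : ι → Fin (s + 1) → V} (hf : IsStarPacking f) :
    #(starEdges f) = Fintype.card ι * s := by
  rw [starEdges, card_image_of_injOn, card_product, card_univ, card_erase_of_mem (mem_univ _),
    card_univ, Fintype.card_fin, Nat.add_sub_cancel]
  rintro ⟨i, a⟩ ha ⟨j, b⟩ hb hab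
  simp only [coe_product, coe_erase, coe_univ, Set.mem_prod, Set.mem_univ, Set.mem_sdiff,
    Set.mem_singleton_iff, true_and] at ha hb hab
  obtain rfl | hij := eq_or_ne i j
  · rcases Sym2.eq_iff.1 hab with ⟨-, h⟩ | ⟨-, h⟩
    · rw [hf.1 i h]
    · exact absurd (hf.1 i h) ha
  · exact absurd hab (hf.2 i j hij 0 a 0 b (Ne.symm ha) (Or.inl rfl) (Ne.symm hb) (Or.inl rfl))

theorem IsStarPacking.starEdges_subset [Fintype V] {f : ι → Fin (s + 1) → V}
    (hf : IsStarPacking f) : starEdges f ⊆ univ.offDiag.image Sym2.mk.uncurry := by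
  intro e he
  obtain ⟨i, a, ha, rfl⟩ := mem_starEdges.1 he
  exact mem_image.2 ⟨(f i 0, f i a), by simpa using fun h => ha (hf.1 i h).symm, rfl⟩

theorem disjoint_starEdges_compl_starCentres [Fintype V] (f : ι → Fin (s + 1) → V) :
    Disjoint (starEdges f) ((starCentres f)ᶜ.offDiag.image Sym2.mk.uncurry) := by
  rw [disjoint_left]
  intro e he heW
  obtain ⟨i, a, -, rfl⟩ := mem_starEdges.1 he
  obtain ⟨⟨x, y⟩, hxy, hxye⟩ := mem_image.1 heW
  have hcentre : f i 0 ∈ starCentres f := mem_image_of_mem _ (mem_univ i)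
  simp only [mem_offDiag, mem_compl] at hxy
  rcases Sym2.mem_iff.1 (hxye ▸ Sym2.mem_mk_left (f i 0) (f i a)) with h | h
  · exact hxy.1 (h ▸ hcentre :)
  · exact hxy.2.1 (h ▸ hcentre :)

theorem IsStarPacking.card_mul_add_choose_le [Fintype V] {f : ι → Fin (s + 1) → V}
    (hf : IsStarPacking f) :
    Fintype.card ι * s + (Fintype.card V - Fintype.card ι).choose 2 ≤
      (Fintype.card V).choose 2 := by
  have hW : Fintype.card V - Fintype.card ι ≤ #(starCentres f)ᶜ := by
    rw [card_compl]
    exact Nat.sub_le_sub_left (card_image_le.trans_eq (card_univ)) _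
  calc Fintype.card ι * s + (Fintype.card V - Fintype.card ι).choose 2
      ≤ #(starEdges f) + #((starCentres f)ᶜ.offDiag.image Sym2.mk.uncurry) := by
        rw [hf.card_starEdges, Sym2.card_image_offDiag]
        exact Nat.add_le_add_left (Nat.choose_le_choose 2 hW) _
    _ = #(starEdges f ∪ (starCentres f)ᶜ.offDiag.image Sym2.mk.uncurry) :=
        (card_union_of_disjoint (disjoint_starEdges_compl_starCentres f)).symm
    _ ≤ #(univ.offDiag.image Sym2.mk.uncurry) := by
        refine card_le_card (union_subset hf.starEdges_subset ?_)
        exact image_subset_image (offDiag_mono (subset_univ _))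
    _ = (Fintype.card V).choose 2 := by rw [Sym2.card_image_offDiag, card_univ]

end StarPacking

theorem card_stars_lt {r n ℓ : ℝ} (hr0 : 0 < r) (hr : r < 1 / 12) (hn : 0 < n)
    (h : ℓ * ((1 / 2 + 2 * r) * n) ≤ n * (n - 1) / 2) : ℓ < (1 - 3 * r) * n := by
  have hq : 0 < (1 / 2 + 2 * r) * n := by positivity
  refine lt_of_mul_lt_mul_right (h.trans_lt ?_) hq.le
  nlinarith [mul_pos (mul_pos hr0 hn) hn]

theorem edge_count_contradiction {r n m M : ℝ} (hr0 : 0 < r) (hr1 : r < 1) (hn : 1 < r ^ 2 * n)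
    (hM : 3 * r * n ≤ M) (hm : n * (n - 1) / 2 - n ≤ m)
    (hcount : m + M * (M - 1) / 2 ≤ (1 + r ^ 2) * n * ((1 + r ^ 2) * n - 1) / 2) : False := by
  have hn0 : 0 < n := by nlinarith
  have hM1 : 1 ≤ 3 * r * n := by nlinarith
  have hMM : 3 * r * n * (3 * r * n - 1) ≤ M * (M - 1) := by nlinarith
  have hsum : n * (r ^ 2 * n * (7 - r ^ 2) - (2 + 3 * r - r ^ 2)) ≤ 0 := by nlinarith
  have hpos : 0 < r ^ 2 * n * (7 - r ^ 2) - (2 + 3 * r - r ^ 2) := by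
    nlinarith [mul_pos (sub_pos.2 hn) (show 0 < 7 - r ^ 2 by nlinarith)]
  exact (mul_pos hn0 hpos).not_ge hsum

/-- For ε ∈ (0,10⁻³) and n sufficiently large, the family of ⌊C(n,2)/((1/2+2√ε)n)⌋
copies of the star with (1/2+2√ε)n edges has total number of edges between
C(n,2) − n and C(n,2), yet it does not pack into K_{(1+ε)n}. The star with s edges
is modelled on Fin (s+1) with centre 0; a packing is a family of injective maps with
pairwise edge-disjoint images of the star edges. -/
theorem statement19 (ε : ℝ) (hε0 : 0 < ε) (hε1 : ε < 1 / 1000) :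
    ∃ n₀ : ℕ, ∀ n : ℕ, n₀ ≤ n → ∀ s N : ℕ,
      (s : ℝ) = (1 / 2 + 2 * Real.sqrt ε) * n →
      (N : ℝ) = (1 + ε) * n →
      ((n.choose 2 : ℝ) - n ≤ ((n.choose 2 / s) * s : ℕ) ∧
        (((n.choose 2 / s) * s : ℕ) : ℝ) ≤ (n.choose 2 : ℝ)) ∧
      ¬ ∃ f : Fin (n.choose 2 / s) → Fin (s + 1) → Fin N,
          (∀ i, Function.Injective (f i)) ∧
          (∀ i j, i ≠ j → ∀ a b c e : Fin (s + 1),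
            a ≠ b → (a = 0 ∨ b = 0) → c ≠ e → (c = 0 ∨ e = 0) →
            s(f i a, f i b) ≠ s(f j c, f j e)) := by
  obtain ⟨n₀, hn₀⟩ := exists_nat_gt (1 / ε)
  refine ⟨n₀, fun n hn s N hs hN => ?_⟩
  set r := Real.sqrt ε
  have hr0 : 0 < r := Real.sqrt_pos.2 hε0
  have hε : r ^ 2 = ε := Real.sq_sqrt hε0.le
  have hr : r < 1 / 12 := by nlinarith
  have hεn : 1 < ε * n := by
    rw [div_lt_iff₀ hε0] at hn₀
    nlinarith [(Nat.cast_le (α := ℝ)).2 hn]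
  have hn0 : (0 : ℝ) < n := by nlinarith
  have hs0 : 0 < s := by exact_mod_cast (show (0 : ℝ) < s by rw [hs]; positivity)
  have hsn : (s : ℝ) ≤ n := by rw [hs]; nlinarith
  have hchoose : ((n.choose 2 : ℕ) : ℝ) = n * (n - 1) / 2 := Nat.cast_choose_two ℝ n
  set ℓ := n.choose 2 / s
  have hupper : ((ℓ * s : ℕ) : ℝ) ≤ n.choose 2 := by exact_mod_cast Nat.div_mul_le_self _ _
  have hlower : (n.choose 2 : ℝ) - n ≤ ((ℓ * s : ℕ) : ℝ) := by
    have : ((n.choose 2 : ℕ) : ℝ) < ((ℓ * s : ℕ) : ℝ) + s := by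
      exact_mod_cast Nat.lt_div_mul_add hs0
    linarith
  refine ⟨⟨hlower, hupper⟩, fun ⟨f, hf⟩ => ?_⟩
  have hℓ : (ℓ : ℝ) < (1 - 3 * r) * n :=
    card_stars_lt hr0 hr hn0 (by rw [← hs, ← hchoose]; exact_mod_cast hupper)
  have hℓN : ℓ ≤ N := by exact_mod_cast (show (ℓ : ℝ) ≤ N by rw [hN]; nlinarith)
  have hM : 3 * r * n ≤ ((N - ℓ : ℕ) : ℝ) := by rw [Nat.cast_sub hℓN, hN]; nlinarith
  have hpack : ((ℓ * s : ℕ) : ℝ) + ((N - ℓ).choose 2 : ℕ) ≤ (N.choose 2 : ℕ) := by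
    exact_mod_cast (by simpa using IsStarPacking.card_mul_add_choose_le hf)
  rw [Nat.cast_choose_two, Nat.cast_choose_two, hN, ← hε] at hpack
  exact edge_count_contradiction hr0 (by linarith) (by rwa [hε]) hM (hchoose ▸ hlower) hpack
end
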